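/- Adjointness of vertex operators for the deformed inner product: with (·,·)_h defined by (p_μ,p_ν)_h = δ_{μν} 𝔷(μ) φ_h(p_μ), the adjoint of Γ_-(f) (multiplication by Ω(p_1 f)) is Γ_+(hf) (the substitution homomorphism p_k ↦ p_k + h_k f_k), i.e. (Γ_-(f) u, v)_h = (u, Γ_+(hf) v)_h for all u, v ∈ Λ. -/

import Mathlib

open MvPolynomial

/-- Λ = ℂ[p_1,p_2,...]; variable `X k` is p_{k+1}. -/
abbrev SymFun : Type := MvPolynomial ℕ ℂ

/-- The element Ω(p₁f) = exp(∑_{k≥1} (f_k/k) p_k) of the completion Λ̂, as a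
power series in the p-variables (`F k` encodes f_{k+1}); multiplication by it
is the vertex operator Γ_-(f). -/
noncomputable def OmegaElt (F : ℕ → ℂ) : MvPowerSeries ℕ ℂ :=
  fun d => d.prod fun k e => (F k / (k + 1)) ^ e / (e.factorial : ℂ)

/-- The deformed pairing (p_μ,p_ν)_h = δ_{μν} 𝔷(μ) φ_h(p_μ), extended to a
pairing of a power series against a polynomial (`h k` encodes h_{k+1}):
(S, Q)_h = ∑_d S_d Q_d 𝔷(d) ∏_k h_k^{d_k}. -/
noncomputable def hallH (h : ℕ → ℂ) (S : MvPowerSeries ℕ ℂ) (Q : SymFun) : ℂ :=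
  ∑ d ∈ Q.support, S d * Q.coeff d *
    (d.prod fun k e => ((k : ℂ) + 1) ^ e * (e.factorial : ℂ) * h k ^ e)

/-- Γ_+(hf): the substitution homomorphism p_k ↦ p_k + h_k f_k. -/
noncomputable def GammaPlusHF (h F : ℕ → ℂ) : SymFun →ₐ[ℂ] SymFun :=
  aeval fun k => X k + C (h k * F k)

/-! Under the pairing, multiplication by the variable `X n` is adjoint to
`(n + 1) * h n * ∂/∂(X n)`, and `Ω(p₁f)` is an eigenvector of `∂/∂(X n)` with eigenvalue
`F n / (n + 1)`, so by the Leibniz rule `∂ (Ω u) = Ω (∂ u + F n / (n + 1) * u)`. Inducting on `v`,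
this extra term is exactly what `Γ_+(hf)` produces from `X n ↦ X n + h n * F n`. -/

theorem Finsupp.prod_add_single_one {α M : Type*} [CommMonoid M] {d : α →₀ ℕ} {n : α}
    {g : α → ℕ → M} (hg : ∀ k, g k 0 = 1) {c : M} (hc : g n (d n + 1) = c * g n (d n)) :
    (d + Finsupp.single n 1).prod g = c * d.prod g := by
  rw [← Finsupp.mul_prod_erase' _ n g hg, ← Finsupp.mul_prod_erase' d n g hg, Finsupp.erase_add,
    Finsupp.erase_single, add_zero, Finsupp.add_apply, Finsupp.single_eq_same, hc, mul_assoc]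

noncomputable def hallWeight (h : ℕ → ℂ) (d : ℕ →₀ ℕ) : ℂ :=
  d.prod fun k e => ((k : ℂ) + 1) ^ e * (e.factorial : ℂ) * h k ^ e

theorem hallWeight_add_single (h : ℕ → ℂ) (d : ℕ →₀ ℕ) (n : ℕ) :
    hallWeight h (d + Finsupp.single n 1) =
      ((n : ℂ) + 1) * ((d n : ℂ) + 1) * h n * hallWeight h d :=
  Finsupp.prod_add_single_one (by simp) (by
    simp only [pow_succ, Nat.factorial_succ]; push_cast; ring)

theorem hallH_eq_sum (h : ℕ → ℂ) (S : MvPowerSeries ℕ ℂ) (Q : SymFun) :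
    hallH h S Q =
      (AddMonoidAlgebra.coeff Q).sum fun d c => MvPowerSeries.coeff d S * c * hallWeight h d := by
  rw [sum_def]; rfl

theorem hallH_add_left (h : ℕ → ℂ) (S T : MvPowerSeries ℕ ℂ) (Q : SymFun) :
    hallH h (S + T) Q = hallH h S Q + hallH h T Q := by
  simp only [hallH_eq_sum, map_add, add_mul, Finsupp.sum_add]

theorem hallH_smul_left (h : ℕ → ℂ) (c : ℂ) (S : MvPowerSeries ℕ ℂ) (Q : SymFun) :
    hallH h (c • S) Q = c * hallH h S Q := by
  simp only [hallH_eq_sum, map_smul, smul_eq_mul, Finsupp.mul_sum, mul_assoc]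

theorem hallH_add_right (h : ℕ → ℂ) (S : MvPowerSeries ℕ ℂ) (P Q : SymFun) :
    hallH h S (P + Q) = hallH h S P + hallH h S Q := by
  rw [hallH_eq_sum, hallH_eq_sum, hallH_eq_sum, AddMonoidAlgebra.coeff_add]
  exact Finsupp.sum_add_index' (by simp) fun _ _ _ => by ring

theorem hallH_smul_right (h : ℕ → ℂ) (S : MvPowerSeries ℕ ℂ) (c : ℂ) (Q : SymFun) :
    hallH h S (c • Q) = c * hallH h S Q := by
  rw [hallH_eq_sum, hallH_eq_sum, AddMonoidAlgebra.coeff_smul, Finsupp.sum_smul_index' (by simp),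
    Finsupp.mul_sum]
  simp only [smul_eq_mul, mul_assoc, mul_left_comm c]

theorem hallH_C (h : ℕ → ℂ) (S : MvPowerSeries ℕ ℂ) (a : ℂ) :
    hallH h S (C a) = MvPowerSeries.constantCoeff S * a := by
  rw [hallH_eq_sum, sum_C (by simp), hallWeight, Finsupp.prod_zero_index, mul_one,
    MvPowerSeries.coeff_zero_eq_constantCoeff_apply]

theorem hallH_mul_X (h : ℕ → ℂ) (S : MvPowerSeries ℕ ℂ) (Q : SymFun) (n : ℕ) :
    hallH h S (Q * X n) = ((n : ℂ) + 1) * h n * hallH h (MvPowerSeries.pderiv ℂ n S) Q := by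
  rw [hallH_eq_sum, hallH_eq_sum, sum_def, sum_def, support_mul_X, Finset.sum_map, Finset.mul_sum]
  refine Finset.sum_congr rfl fun d _ => ?_
  rw [addRightEmbedding_apply, coeff_mul_X, hallWeight_add_single,
    MvPowerSeries.coeff_pderiv]
  ring

theorem coeff_OmegaElt (F : ℕ → ℂ) (d : ℕ →₀ ℕ) :
    MvPowerSeries.coeff d (OmegaElt F) =
      d.prod fun k e => (F k / (k + 1)) ^ e / (e.factorial : ℂ) :=
  rfl

theorem constantCoeff_OmegaElt (F : ℕ → ℂ) : MvPowerSeries.constantCoeff (OmegaElt F) = 1 := by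
  rw [← MvPowerSeries.coeff_zero_eq_constantCoeff_apply, coeff_OmegaElt, Finsupp.prod_zero_index]

theorem pderiv_OmegaElt (F : ℕ → ℂ) (n : ℕ) :
    MvPowerSeries.pderiv ℂ n (OmegaElt F) = (F n / (n + 1)) • OmegaElt F := by
  ext d : 1
  have hshift : MvPowerSeries.coeff (d + Finsupp.single n 1) (OmegaElt F) =
      F n / (n + 1) / (d n + 1) * MvPowerSeries.coeff d (OmegaElt F) := by
    rw [coeff_OmegaElt, coeff_OmegaElt]
    exact Finsupp.prod_add_single_one (by simp) (by
      simp only [pow_succ, Nat.factorial_succ]; push_cast; field_simp)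
  rw [MvPowerSeries.coeff_pderiv, MvPowerSeries.coeff_smul, hshift]
  field_simp

theorem pderiv_OmegaElt_mul (F : ℕ → ℂ) (n : ℕ) (S : MvPowerSeries ℕ ℂ) :
    MvPowerSeries.pderiv ℂ n (OmegaElt F * S) =
      (F n / (n + 1)) • (OmegaElt F * S) + OmegaElt F * MvPowerSeries.pderiv ℂ n S := by
  rw [Derivation.leibniz, pderiv_OmegaElt, smul_eq_mul, smul_eq_mul, mul_smul_comm, mul_comm S,
    add_comm]

theorem GammaPlusHF_X (h F : ℕ → ℂ) (n : ℕ) : GammaPlusHF h F (X n) = X n + C (h n * F n) :=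
  aeval_X _ n

theorem GammaPlusHF_C (h F : ℕ → ℂ) (a : ℂ) : GammaPlusHF h F (C a) = C a :=
  aeval_C _ a

theorem gammaMinus_adjoint (h F : ℕ → ℂ) (u v : SymFun) :
    hallH h (OmegaElt F * (u : MvPowerSeries ℕ ℂ)) v =
      hallH h ((u : SymFun) : MvPowerSeries ℕ ℂ) (GammaPlusHF h F v) := by
  induction v using MvPolynomial.induction_on generalizing u with
  | C a =>
    rw [GammaPlusHF_C, hallH_C, hallH_C, map_mul, constantCoeff_OmegaElt, one_mul]
  | add p q hp hq => rw [map_add, hallH_add_right, hallH_add_right, hp, hq]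
  | mul_X p n ih =>
    calc hallH h (OmegaElt F * u) (p * X n)
        = (n + 1) * h n * (F n / (n + 1) * hallH h (OmegaElt F * u) p +
            hallH h (OmegaElt F * ↑(pderiv n u)) p) := by
          rw [hallH_mul_X, pderiv_OmegaElt_mul, hallH_add_left, hallH_smul_left,
            MvPowerSeries.pderiv_coe]
      _ = (n + 1) * h n * hallH h ↑(pderiv n u) (GammaPlusHF h F p) +
            h n * F n * hallH h u (GammaPlusHF h F p) := by
          rw [ih, ih]; field_simp; ring
      _ = hallH h u (GammaPlusHF h F (p * X n)) := by
          rw [map_mul, GammaPlusHF_X, mul_add, mul_comm _ (C _), C_mul', hallH_add_right,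
            hallH_smul_right, hallH_mul_X, MvPowerSeries.pderiv_coe]
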